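/- Let σ > 0 and ω, c real with ω > 0 and 4ω > c². Set κ = √(4ω − c²), h(x) = cosh(σκx) − c/(2√ω), h_c(x) = −(σc/κ) x sinh(σκx) − 1/(2√ω), h_ω(x) = (2σ/κ) x sinh(σκx) + c/(4ω^{3/2}), and α_n = ∫_0^∞ h(x)^{−1/σ−n} dx. Then the following four identities hold: (1) ∫_0^∞ h^{−1/σ−2} h_c dx = −(1/(2√ω)) α₂ − (cσ/((σ+1)κ²)) α₁; (2) ∫_0^∞ h^{−1/σ−1} h_c dx = −(1/(2√ω)) α₁ − (cσ/κ²) α₀; (3) ∫_0^∞ h^{−1/σ−2} h_ω dx = (c/(4ω^{3/2})) α₂ + (2σ/((σ+1)κ²)) α₁; (4) ∫_0^∞ h^{−1/σ−1} h_ω dx = (c/(4ω^{3/2})) α₁ + (2σ/κ²) α₀. -/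

import Mathlib

/-!
With `a = σκ` and `δ = c/(2√ω)` we have `h(x) = cosh(ax) − δ`, `h' = a sinh(ax)`, and `c² < 4ω`
means `|δ| < 1`, so `h ≥ (1 − |δ|) cosh(ax) ≥ (1 − |δ|)/2 · e^{ax}`: every power `h^q` with `q < 0`
decays exponentially. Both `h_c` and `h_ω` have the shape `b x sinh(ax) + e`, and integrating
`x · (h^{p+1})' = (p+1) a x sinh(ax) h^p` by parts (the boundary terms vanish by that decay) gives
`∫₀^∞ x sinh(ax) h^p = −∫₀^∞ h^{p+1} / ((p+1) a)`. For `p = −1/σ − n − 1` this turns each integral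
into a combination of `α_n` and `α_{n+1}`.
-/

open Real MeasureTheory

/-- `κ = √(4ω − c²)`. -/
noncomputable def kap (ω c : ℝ) : ℝ := Real.sqrt (4 * ω - c ^ 2)

/-- `h(x) = cosh(σκx) − c/(2√ω)`. -/
noncomputable def hfun (σ ω c : ℝ) (x : ℝ) : ℝ :=
  Real.cosh (σ * kap ω c * x) - c / (2 * Real.sqrt ω)

/-- `h_c(x) = −(σc/κ) x sinh(σκx) − 1/(2√ω)`. -/
noncomputable def hfunc (σ ω c : ℝ) (x : ℝ) : ℝ :=
  -(σ * c / kap ω c) * x * Real.sinh (σ * kap ω c * x) - 1 / (2 * Real.sqrt ω)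

/-- `h_ω(x) = (2σ/κ) x sinh(σκx) + c/(4ω^{3/2})`. -/
noncomputable def hfunw (σ ω c : ℝ) (x : ℝ) : ℝ :=
  (2 * σ / kap ω c) * x * Real.sinh (σ * kap ω c * x) + c / (4 * ω ^ ((3 : ℝ) / 2))

/-- `α_n = ∫_0^∞ h^{−1/σ−n} dx`. -/
noncomputable def alphaInt (σ ω c : ℝ) (n : ℕ) : ℝ :=
  ∫ x in Set.Ioi (0 : ℝ), hfun σ ω c x ^ (-(1 / σ) - (n : ℝ))

open Set Filter Topology

section CoshSub

variable {a δ : ℝ}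

lemma one_sub_abs_mul_cosh_le_cosh_sub (t : ℝ) :
    (1 - |δ|) * cosh t ≤ cosh t - δ := by
  nlinarith [mul_le_mul_of_nonneg_left (one_le_cosh t) (abs_nonneg δ), le_abs_self δ]

lemma cosh_sub_pos (t : ℝ) (hδ : δ < 1) : 0 < cosh t - δ := by
  linarith [one_le_cosh t]

lemma cosh_sub_rpow_le (x : ℝ) {q : ℝ} (hδ : |δ| < 1) (hq : q ≤ 0) :
    (cosh (a * x) - δ) ^ q ≤ ((1 - |δ|) / 2) ^ q * exp (-(-q * a) * x) := by
  have hε : 0 < (1 - |δ|) / 2 := by linarith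
  have hlow : (1 - |δ|) / 2 * exp (a * x) ≤ cosh (a * x) - δ := by
    have := one_sub_abs_mul_cosh_le_cosh_sub (δ := δ) (a * x)
    have : exp (a * x) / 2 ≤ cosh (a * x) := by
      rw [cosh_eq]; linarith [exp_pos (-(a * x))]
    nlinarith
  calc (cosh (a * x) - δ) ^ q ≤ ((1 - |δ|) / 2 * exp (a * x)) ^ q :=
        rpow_le_rpow_of_nonpos (by positivity) hlow hq
    _ = ((1 - |δ|) / 2) ^ q * exp (-(-q * a) * x) := by
        rw [mul_rpow hε.le (exp_pos _).le, ← exp_mul]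
        ring_nf

lemma continuous_cosh_sub_rpow (q : ℝ) (hδ : δ < 1) :
    Continuous fun x => (cosh (a * x) - δ) ^ q :=
  (by fun_prop : Continuous fun x => cosh (a * x) - δ).rpow_const
    fun x => Or.inl (cosh_sub_pos _ hδ).ne'

lemma integrableOn_rpow_mul_cosh_sub_rpow {s q : ℝ} (ha : 0 < a) (hδ : |δ| < 1)
    (hs : -1 < s) (hq : q < 0) :
    IntegrableOn (fun x => x ^ s * (cosh (a * x) - δ) ^ q) (Ioi 0) := by
  have hδ1 : δ < 1 := (le_abs_self δ).trans_lt hδ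
  refine Integrable.mono' ((integrableOn_rpow_mul_exp_neg_mul_rpow hs one_pos
    (mul_pos (neg_pos.2 hq) ha)).const_mul (((1 - |δ|) / 2) ^ q)) ?_ ?_
  · refine ContinuousOn.aestronglyMeasurable ?_ measurableSet_Ioi
    exact (continuousOn_id.rpow_const fun x hx => Or.inl (ne_of_gt hx)).mul
      (continuous_cosh_sub_rpow q hδ1).continuousOn
  · filter_upwards [ae_restrict_mem measurableSet_Ioi] with x (hx : 0 < x)
    have hxs : 0 ≤ x ^ s := rpow_nonneg hx.le s
    rw [norm_of_nonneg (mul_nonneg hxs (rpow_nonneg (cosh_sub_pos _ hδ1).le q)), rpow_one,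
      mul_left_comm]
    exact mul_le_mul_of_nonneg_left (cosh_sub_rpow_le x hδ hq.le) hxs

lemma tendsto_mul_cosh_sub_rpow_atTop {q : ℝ} (ha : 0 < a) (hδ : |δ| < 1) (hq : q < 0) :
    Tendsto (fun x => x * (cosh (a * x) - δ) ^ q) atTop (𝓝 0) := by
  have hδ1 : δ < 1 := (le_abs_self δ).trans_lt hδ
  have hexp := (tendsto_rpow_mul_exp_neg_mul_atTop_nhds_zero 1 _
    (mul_pos (neg_pos.2 hq) ha)).const_mul (((1 - |δ|) / 2) ^ q)
  rw [mul_zero] at hexp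
  refine squeeze_zero' ?_ ?_ hexp
  · filter_upwards [eventually_ge_atTop 0] with x hx
    exact mul_nonneg hx (rpow_nonneg (cosh_sub_pos _ hδ1).le q)
  · filter_upwards [eventually_ge_atTop 0] with x hx
    rw [rpow_one, mul_left_comm]
    exact mul_le_mul_of_nonneg_left (cosh_sub_rpow_le x hδ hq.le) hx

lemma hasDerivAt_cosh_sub_rpow (q x : ℝ) (hδ : δ < 1) :
    HasDerivAt (fun x => (cosh (a * x) - δ) ^ q)
      (q * a * (sinh (a * x) * (cosh (a * x) - δ) ^ (q - 1))) x := by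
  have := ((((hasDerivAt_id' x).const_mul a).cosh).sub_const δ).rpow_const
    (p := q) (Or.inl (cosh_sub_pos _ hδ).ne')
  convert this using 1
  ring

lemma integrableOn_mul_sinh_mul_cosh_sub_rpow {p : ℝ} (ha : 0 < a) (hδ : |δ| < 1)
    (hp : p < -1) :
    IntegrableOn (fun x => x * sinh (a * x) * (cosh (a * x) - δ) ^ p) (Ioi 0) := by
  have hδ1 : δ < 1 := (le_abs_self δ).trans_lt hδ
  have hε : 0 < 1 - |δ| := by linarith
  have hint := (integrableOn_rpow_mul_cosh_sub_rpow (s := 1) ha hδ (by norm_num)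
    (by linarith : p + 1 < 0)).const_mul (1 - |δ|)⁻¹
  refine Integrable.mono' hint ?_ ?_
  · refine (Continuous.aestronglyMeasurable ?_).restrict
    exact (by fun_prop : Continuous fun x => x * sinh (a * x)).mul
      (continuous_cosh_sub_rpow p hδ1)
  · filter_upwards [ae_restrict_mem measurableSet_Ioi] with x (hx : 0 < x)
    have hg := cosh_sub_pos (a * x) hδ1
    have hsinh : |sinh (a * x)| ≤ (1 - |δ|)⁻¹ * (cosh (a * x) - δ) := by
      rw [le_inv_mul_iff₀ hε, abs_sinh, ← cosh_abs (a * x)]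
      exact (mul_le_mul_of_nonneg_left (sinh_lt_cosh _).le hε.le).trans
        (one_sub_abs_mul_cosh_le_cosh_sub _)
    rw [norm_mul, norm_mul, norm_of_nonneg hx.le, norm_of_nonneg (rpow_nonneg hg.le p),
      Real.norm_eq_abs, rpow_one, rpow_add_one hg.ne']
    calc x * |sinh (a * x)| * (cosh (a * x) - δ) ^ p
        ≤ x * ((1 - |δ|)⁻¹ * (cosh (a * x) - δ)) * (cosh (a * x) - δ) ^ p := by gcongr
      _ = _ := by ring

lemma integral_mul_sinh_mul_cosh_sub_rpow {p : ℝ} (ha : 0 < a) (hδ : |δ| < 1) (hp : p < -1) :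
    ∫ x in Ioi 0, x * sinh (a * x) * (cosh (a * x) - δ) ^ p
      = -(∫ x in Ioi 0, (cosh (a * x) - δ) ^ (p + 1)) / ((p + 1) * a) := by
  have hδ1 : δ < 1 := (le_abs_self δ).trans_lt hδ
  have hp1 : p + 1 < 0 := by linarith
  have hderiv (x : ℝ) : HasDerivAt (fun x => (cosh (a * x) - δ) ^ (p + 1))
      ((p + 1) * a * (sinh (a * x) * (cosh (a * x) - δ) ^ p)) x := by
    simpa only [add_sub_cancel_right] using hasDerivAt_cosh_sub_rpow (p + 1) x hδ1
  have hparts := integral_Ioi_mul_deriv_eq_deriv_mul (a := 0) (a' := 0) (b' := 0)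
    (fun x _ => hasDerivAt_id' x) (fun x _ => hderiv x)
    (IntegrableOn.congr_fun ((integrableOn_mul_sinh_mul_cosh_sub_rpow ha hδ hp).const_mul
      ((p + 1) * a)) (fun x _ => by simp only [Pi.mul_apply]; ring) measurableSet_Ioi)
    (by simpa [Pi.mul_def] using
      integrableOn_rpow_mul_cosh_sub_rpow (s := 0) ha hδ (by norm_num) hp1)
    (by simpa [Pi.mul_def] using ((continuous_id'.mul
      (continuous_cosh_sub_rpow (p + 1) hδ1)).tendsto 0).mono_left nhdsWithin_le_nhds)
    (tendsto_mul_cosh_sub_rpow_atTop ha hδ hp1)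
  simp only [one_mul, neg_zero, zero_sub] at hparts
  rw [eq_div_iff (mul_neg_of_neg_of_pos hp1 ha).ne, ← hparts, mul_comm, ← integral_const_mul]
  congr 1 with x
  ring

lemma integral_cosh_sub_rpow_mul_add {p : ℝ} (ha : 0 < a) (hδ : |δ| < 1) (hp : p < -1)
    (b e : ℝ) :
    ∫ x in Ioi 0, (cosh (a * x) - δ) ^ p * (b * x * sinh (a * x) + e)
      = -b / ((p + 1) * a) * (∫ x in Ioi 0, (cosh (a * x) - δ) ^ (p + 1))
        + e * ∫ x in Ioi 0, (cosh (a * x) - δ) ^ p := by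
  have hint := integrableOn_rpow_mul_cosh_sub_rpow (s := 0) ha hδ (by norm_num)
    (by linarith : p < 0)
  simp only [rpow_zero, one_mul] at hint
  have hsplit : ∫ x in Ioi 0, (cosh (a * x) - δ) ^ p * (b * x * sinh (a * x) + e)
      = b * (∫ x in Ioi 0, x * sinh (a * x) * (cosh (a * x) - δ) ^ p)
        + e * ∫ x in Ioi 0, (cosh (a * x) - δ) ^ p := by
    rw [← integral_const_mul, ← integral_const_mul, ← integral_add
      ((integrableOn_mul_sinh_mul_cosh_sub_rpow ha hδ hp).const_mul b) (hint.const_mul e)]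
    congr 1 with x
    ring
  rw [hsplit, integral_mul_sinh_mul_cosh_sub_rpow ha hδ hp]
  ring

end CoshSub

lemma kap_pos {ω c : ℝ} (h : c ^ 2 < 4 * ω) : 0 < kap ω c :=
  sqrt_pos.2 (by linarith)

lemma abs_div_two_sqrt_lt_one {ω c : ℝ} (hω : 0 < ω) (h : c ^ 2 < 4 * ω) :
    |c / (2 * √ω)| < 1 := by
  have h2 : 0 < 2 * √ω := by positivity
  rw [abs_div, abs_of_pos h2, div_lt_one h2]
  refine abs_lt_of_sq_lt_sq ?_ h2.le
  rwa [mul_pow, sq_sqrt hω.le, show (2 : ℝ) ^ 2 = 4 by norm_num]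

lemma integral_hfun_rpow_mul_add {σ ω c p : ℝ} (hσ : 0 < σ) (hω : 0 < ω)
    (h : c ^ 2 < 4 * ω) (n : ℕ) (hp : p = -(1 / σ) - (n + 1)) (b e : ℝ) :
    ∫ x in Ioi 0, hfun σ ω c x ^ p * (b * x * sinh (σ * kap ω c * x) + e)
      = b / ((1 + n * σ) * kap ω c) * alphaInt σ ω c n + e * alphaInt σ ω c (n + 1) := by
  have hpn : p + 1 = -(1 / σ) - n := by rw [hp]; ring
  have hpn' : p = -(1 / σ) - ((n + 1 : ℕ) : ℝ) := by rw [hp]; push_cast; ring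
  have hcoeff : -b / ((-(1 / σ) - n) * (σ * kap ω c)) = b / ((1 + n * σ) * kap ω c) := by
    have := kap_pos h
    rw [show -(1 / σ) - n = -((1 + n * σ) / σ) by field_simp; ring]
    field_simp
  have hdecay := integral_cosh_sub_rpow_mul_add (p := p) (mul_pos hσ (kap_pos h))
    (abs_div_two_sqrt_lt_one hω h) (by rw [hp]; have := one_div_pos.2 hσ; linarith) b e
  rw [hpn, hcoeff, hpn'] at hdecay
  rwa [hpn']

lemma hfunc_eq_add (σ ω c x : ℝ) :
    hfunc σ ω c x = -(σ * c / kap ω c) * x * sinh (σ * kap ω c * x) + -(1 / (2 * √ω)) :=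
  sub_eq_add_neg _ _

theorem h_derivative_integral_identities (σ ω c : ℝ) (hσ : 0 < σ) (hω : 0 < ω)
    (h : c ^ 2 < 4 * ω) :
    (∫ x in Set.Ioi (0 : ℝ), hfun σ ω c x ^ (-(1 / σ) - 2) * hfunc σ ω c x)
        = -(1 / (2 * Real.sqrt ω)) * alphaInt σ ω c 2
          - (c * σ / ((σ + 1) * kap ω c ^ 2)) * alphaInt σ ω c 1 ∧
    (∫ x in Set.Ioi (0 : ℝ), hfun σ ω c x ^ (-(1 / σ) - 1) * hfunc σ ω c x)
        = -(1 / (2 * Real.sqrt ω)) * alphaInt σ ω c 1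
          - (c * σ / kap ω c ^ 2) * alphaInt σ ω c 0 ∧
    (∫ x in Set.Ioi (0 : ℝ), hfun σ ω c x ^ (-(1 / σ) - 2) * hfunw σ ω c x)
        = (c / (4 * ω ^ ((3 : ℝ) / 2))) * alphaInt σ ω c 2
          + (2 * σ / ((σ + 1) * kap ω c ^ 2)) * alphaInt σ ω c 1 ∧
    (∫ x in Set.Ioi (0 : ℝ), hfun σ ω c x ^ (-(1 / σ) - 1) * hfunw σ ω c x)
        = (c / (4 * ω ^ ((3 : ℝ) / 2))) * alphaInt σ ω c 1
          + (2 * σ / kap ω c ^ 2) * alphaInt σ ω c 0 := by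
  have hκ := (kap_pos h).ne'
  simp only [hfunc_eq_add, hfunw]
  refine ⟨?_, ?_, ?_, ?_⟩
  · rw [integral_hfun_rpow_mul_add hσ hω h 1 (by norm_num)]
    field_simp
    ring
  · rw [integral_hfun_rpow_mul_add hσ hω h 0 (by norm_num)]
    field_simp
    ring
  · rw [integral_hfun_rpow_mul_add hσ hω h 1 (by norm_num)]
    field_simp
    ring
  · rw [integral_hfun_rpow_mul_add hσ hω h 0 (by norm_num)]
    field_simp
    ring
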